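/- Let M' be a positive integer, v ∈ ℝ, and let H : ℤ → ℂ be finitely supported. Define ψ : ℝ × ℝ → ℂ by ψ(t, x) = Σ_n H(n) · e^{−2πi t v n} · e^{2πi (x + t v)·Alias_{M'}(n)}. Assume that for every m ∈ ℤ there is at most one n in the support of H with Alias_{M'}(n) = m and n ≠ m. Then for every k the partial derivative ∂ψ/∂t(0, k/M') exists, and (1/M') · Σ_{k=0}^{M'−1} |∂ψ/∂t(0, k/M')|² = (2π)² v² · Σ_n (Alias_{M'}(n) − n)² · |H(n)|². -/

import Mathlib

open Complex Real

/-- The aliasing map: `aliasMap fs n` is the representative of `n` modulo `fs`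
lying in `[-fs/2, fs/2)`. -/
def aliasMap (fs : ℕ) (n : ℤ) : ℤ :=
  if 2 * (n % (fs : ℤ)) < (fs : ℤ) then n % (fs : ℤ) else n % (fs : ℤ) - (fs : ℤ)

/-- `psi M' v H t x`: translate the band-limited signal with Fourier coefficients `H`
by `t·v`, alias each frequency `n` to `aliasMap M' n`, and translate back by `−t·v`
(evaluation at `x + t·v`). -/
noncomputable def psi (M' : ℕ) (v : ℝ) (H : ℤ →₀ ℂ) (t x : ℝ) : ℂ :=
  ∑ n ∈ H.support,
    H n * Complex.exp (-(2 * (π : ℂ) * I * (t : ℂ) * (v : ℂ) * (n : ℂ))) *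
      Complex.exp (2 * (π : ℂ) * I * ((x : ℂ) + (t : ℂ) * (v : ℂ)) * (aliasMap M' n : ℂ))

/-!
The `t`-derivative of `ψ(·, x)` at `0` is `2πiv ∑ₙ H(n)(Alias(n) − n) e^{2πi x Alias(n)}`, a
trigonometric polynomial in `x`. On the grid `k/M'` the characters `e^{2πi k m/M'}` are orthogonal
and separate frequencies modulo `M'`. Aliased frequencies that are congruent modulo `M'` are
equal, so by the fibre condition distinct `n` with nonzero coefficient `H(n)(Alias(n) − n)` have
incongruent aliases, and the discrete Parseval identity gives the sum of the squared coefficients.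
-/

open ComplexConjugate

theorem aliasMap_modEq (fs : ℕ) (n : ℤ) : aliasMap fs n ≡ n [ZMOD fs] := by
  unfold aliasMap
  split_ifs
  · exact Int.mod_modEq n fs
  · simpa using (Int.mod_modEq n fs).sub_right (fs : ℤ)

theorem aliasMap_eq_of_modEq {fs : ℕ} {a b : ℤ} (h : a ≡ b [ZMOD fs]) :
    aliasMap fs a = aliasMap fs b := by
  simp only [aliasMap, h.eq]

theorem aliasMap_eq_of_dvd_sub {fs : ℕ} {a b : ℤ}
    (h : (fs : ℤ) ∣ aliasMap fs a - aliasMap fs b) : aliasMap fs a = aliasMap fs b :=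
  aliasMap_eq_of_modEq <|
    (aliasMap_modEq fs a).symm.trans <| (Int.modEq_iff_dvd.2 h).symm.trans (aliasMap_modEq fs b)

theorem sum_range_exp_two_pi_I_mul_div (M : ℕ) (hM : M ≠ 0) (d : ℤ) :
    ∑ k ∈ Finset.range M, cexp (2 * π * I * k * d / M) = if (M : ℤ) ∣ d then (M : ℂ) else 0 := by
  have hζ := Complex.isPrimitiveRoot_exp M hM
  set w := cexp (2 * π * I / M) ^ d
  have hterm (k : ℕ) : cexp (2 * π * I * k * d / M) = w ^ k := by
    rw [← zpow_natCast, ← zpow_mul, ← Complex.exp_int_mul]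
    push_cast
    ring_nf
  simp only [hterm]
  split_ifs with hd
  · simp [w, (hζ.zpow_eq_one_iff_dvd d).2 hd]
  · have hw : w ≠ 1 := mt (hζ.zpow_eq_one_iff_dvd d).1 hd
    have hwM : w ^ M = 1 := by
      rw [← zpow_natCast, ← zpow_mul, mul_comm d, zpow_mul, zpow_natCast, hζ.pow_eq_one, one_zpow]
    rw [geom_sum_eq hw, hwM, sub_self, zero_div]

theorem sum_range_norm_sq_sum_exp {ι : Type*} (M : ℕ) (hM : M ≠ 0) (s : Finset ι)
    (c : ι → ℂ) (f : ι → ℤ)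
    (hf : ∀ i ∈ s, ∀ j ∈ s, c i ≠ 0 → c j ≠ 0 → (M : ℤ) ∣ f i - f j → i = j) :
    ∑ k ∈ Finset.range M, ‖∑ i ∈ s, c i * cexp (2 * π * I * k * f i / M)‖ ^ 2 =
      M * ∑ i ∈ s, ‖c i‖ ^ 2 := by
  have hphase (k : ℕ) (i j : ι) :
      cexp (2 * π * I * k * f i / M) * conj (cexp (2 * π * I * k * f j / M)) =
        cexp (2 * π * I * k * (f i - f j : ℤ) / M) := by
    rw [← Complex.exp_conj, ← Complex.exp_add]
    congr 1
    simp only [map_div₀, map_mul, map_ofNat, Complex.conj_ofReal, Complex.conj_I, map_natCast,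
      map_intCast]
    push_cast
    ring
  have hdiag (i : ι) (hi : i ∈ s) :
      ∑ j ∈ s, c i * conj (c j) * (if (M : ℤ) ∣ f i - f j then (M : ℂ) else 0) =
        M * (c i * conj (c i)) := by
    rw [Finset.sum_eq_single_of_mem i hi (fun j hj hji => ?_)]
    · simp only [sub_self, dvd_zero, if_true]
      ring
    by_cases hcij : c i ≠ 0 ∧ c j ≠ 0
    · have hndvd : ¬ (M : ℤ) ∣ f i - f j := fun h => hji (hf i hi j hj hcij.1 hcij.2 h).symm
      simp [hndvd]
    · rcases not_and_or.1 hcij with h | h <;> simp_all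
  apply Complex.ofReal_injective
  push_cast
  simp only [← Complex.mul_conj', map_sum, map_mul, Finset.sum_mul_sum]
  rw [Finset.mul_sum]
  calc ∑ k ∈ Finset.range M, ∑ i ∈ s, ∑ j ∈ s,
        c i * cexp (2 * π * I * k * f i / M) * (conj (c j) * conj (cexp (2 * π * I * k * f j / M)))
      = ∑ i ∈ s, ∑ j ∈ s, c i * conj (c j) *
          ∑ k ∈ Finset.range M, cexp (2 * π * I * k * (f i - f j : ℤ) / M) := by
        rw [Finset.sum_comm]
        refine Finset.sum_congr rfl fun i _ => ?_
        rw [Finset.sum_comm]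
        refine Finset.sum_congr rfl fun j _ => ?_
        rw [Finset.mul_sum]
        refine Finset.sum_congr rfl fun k _ => ?_
        rw [← hphase]
        ring
    _ = ∑ i ∈ s, M * (c i * conj (c i)) := by
        refine Finset.sum_congr rfl fun i hi => ?_
        simp only [sum_range_exp_two_pi_I_mul_div M hM]
        exact hdiag i hi

theorem hasDerivAt_psi (M' : ℕ) (v : ℝ) (H : ℤ →₀ ℂ) (x t : ℝ) :
    HasDerivAt (fun t => psi M' v H t x)
      (∑ n ∈ H.support, 2 * π * I * v * (aliasMap M' n - n : ℤ) *
        (H n * cexp (-(2 * π * I * t * v * n)) * cexp (2 * π * I * (x + t * v) * aliasMap M' n)))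
      t := by
  refine HasDerivAt.fun_sum fun n _ => ?_
  set D : ℂ := 2 * π * I * v * (aliasMap M' n - n : ℤ)
  have hphase : HasDerivAt (fun t : ℝ => (t : ℂ) * D + 2 * π * I * x * aliasMap M' n) D t := by
    simpa using
      ((hasDerivAt_id t).ofReal_comp.mul_const D).add_const (2 * π * I * x * aliasMap M' n)
  have hterm (t : ℝ) : H n * cexp (-(2 * π * I * t * v * n)) *
      cexp (2 * π * I * (x + t * v) * aliasMap M' n) =
        H n * cexp ((t : ℂ) * D + 2 * π * I * x * aliasMap M' n) := by
    rw [mul_assoc, ← Complex.exp_add]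
    congr 2
    push_cast [D]
    ring
  simp only [hterm]
  exact (hphase.cexp.const_mul (H n)).congr_deriv (by ring)

theorem hasDerivAt_psi_zero (M' : ℕ) (v : ℝ) (H : ℤ →₀ ℂ) (x : ℝ) :
    HasDerivAt (fun t => psi M' v H t x)
      (2 * π * I * v *
        ∑ n ∈ H.support, H n * (aliasMap M' n - n : ℤ) * cexp (2 * π * I * x * aliasMap M' n))
      0 := by
  convert hasDerivAt_psi M' v H x 0 using 1
  simp only [Finset.mul_sum, Complex.ofReal_zero, zero_mul, mul_zero, neg_zero, Complex.exp_zero,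
    add_zero, mul_one]
  exact Finset.sum_congr rfl fun n _ => by ring

/-- Translation equivariance error of aliasing (1d): if each output frequency `m` has
at most one input frequency `n ≠ m` in the support of `H` aliasing onto it, then the
mean over the sampling grid of the squared modulus of `∂ψ/∂t(0,·)` equals
`(2π)² v² ∑ₙ (aliasMap M' n − n)² |H n|²`. -/
theorem aliasing_translation_equivariance_error
    (M' : ℕ) (hM : 0 < M') (v : ℝ) (H : ℤ →₀ ℂ)
    (hfib : ∀ m : ℤ, ∀ n₁ ∈ H.support, ∀ n₂ ∈ H.support,
      aliasMap M' n₁ = m → n₁ ≠ m → aliasMap M' n₂ = m → n₂ ≠ m → n₁ = n₂) :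
    (∀ k : ℕ, DifferentiableAt ℝ (fun t => psi M' v H t ((k : ℝ) / (M' : ℝ))) 0) ∧
    (1 / (M' : ℝ)) * ∑ k ∈ Finset.range M',
        ‖deriv (fun t => psi M' v H t ((k : ℝ) / (M' : ℝ))) 0‖ ^ 2 =
      (2 * π) ^ 2 * v ^ 2 * ∑ n ∈ H.support,
        ((aliasMap M' n - n : ℤ) : ℝ) ^ 2 * ‖H n‖ ^ 2 := by
  set c : ℤ → ℂ := fun n => H n * (aliasMap M' n - n : ℤ)
  have hderiv (k : ℕ) : HasDerivAt (fun t => psi M' v H t (k / M'))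
      (2 * π * I * v * ∑ n ∈ H.support, c n * cexp (2 * π * I * k * aliasMap M' n / M')) 0 := by
    refine (hasDerivAt_psi_zero M' v H (k / M')).congr_deriv ?_
    congr 1
    refine Finset.sum_congr rfl fun n _ => ?_
    push_cast [c]
    ring_nf
  have hsep : ∀ n₁ ∈ H.support, ∀ n₂ ∈ H.support, c n₁ ≠ 0 → c n₂ ≠ 0 →
      (M' : ℤ) ∣ aliasMap M' n₁ - aliasMap M' n₂ → n₁ = n₂ := by
    intro n₁ h₁ n₂ h₂ hc₁ hc₂ hdvd
    have hmoved (n : ℤ) (hc : c n ≠ 0) : n ≠ aliasMap M' n := fun h => hc (by simp [c, ← h])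
    have heq := aliasMap_eq_of_dvd_sub hdvd
    exact hfib _ n₁ h₁ n₂ h₂ rfl (hmoved n₁ hc₁) heq.symm (heq ▸ hmoved n₂ hc₂)
  refine ⟨fun k => (hderiv k).differentiableAt, ?_⟩
  have hnorm : ‖(2 * π * I * v : ℂ)‖ ^ 2 = (2 * π) ^ 2 * v ^ 2 := by simp [mul_pow]
  have hc (n : ℤ) : ‖c n‖ ^ 2 = ((aliasMap M' n - n : ℤ) : ℝ) ^ 2 * ‖H n‖ ^ 2 := by
    rw [norm_mul, mul_pow, Complex.norm_intCast, sq_abs, mul_comm]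
  simp only [fun k => (hderiv k).deriv, norm_mul (2 * π * I * v : ℂ), mul_pow, hnorm,
    ← Finset.mul_sum, sum_range_norm_sq_sum_exp M' hM.ne' H.support c _ hsep, hc]
  field_simp
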